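/- Let p be an odd prime, n ≥ 2 with p > 2n - 1, and let k ∈ F_p, k ≠ 0. The number of vectors (x_1,...,x_{n-1}) ∈ F_p^{n-1} such that x_i ≠ 0, x_i ≠ k, all x_i pairwise distinct, and x_{i_1} + x_{i_2} ≠ k for all i_1 ≤ i_2 with i_1 < i_2, equals (p-3)(p-5)···(p-(2n-1)) + (n-1)(p-3)(p-5)···(p-(2n-3)). -/

import Mathlib

/-!
Over a finite field `F` with `q` elements and `2 ≠ 0`, put `h = k / 2` and `T = F \ {0, k, h}`.
The admissible values are `T ∪ {h}`, and `a ↦ k - a` is a fixed-point-free involution of `T`.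
A tuple with entries in `T` is chosen one coordinate at a time, each choice `a` ruling out the
pair `{a, k - a}` for the remaining coordinates; this gives `(q - 3)(q - 5)⋯`. Since the entries
are distinct, `h` occurs at most once, and `h + y ≠ k` for every `y ∈ T`, so the tuples
containing `h` are counted by the position of `h` times the number of shorter tuples from `T`.
-/

open Finset

def sumAvoidingTuples {G : Type*} [Add G] [DecidableEq G] (k : G) (S : Finset G) (m : ℕ) :
    Finset (Fin m → G) :=
  {x ∈ Fintype.piFinset fun _ => S | ∀ i j, i ≠ j → x i ≠ x j ∧ x i + x j ≠ k}

namespace sumAvoidingTuples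
variable {G : Type*} [DecidableEq G] {k : G} {S : Finset G} {m : ℕ}

lemma mem_iff [Add G] {x : Fin m → G} :
    x ∈ sumAvoidingTuples k S m ↔
      (∀ i, x i ∈ S) ∧ ∀ i j, i ≠ j → x i ≠ x j ∧ x i + x j ≠ k := by
  simp [sumAvoidingTuples]

lemma mem_iff_lt [AddCommMagma G] {x : Fin m → G} :
    x ∈ sumAvoidingTuples k S m ↔
      (∀ i, x i ∈ S) ∧ (∀ i j, i < j → x i ≠ x j) ∧ ∀ i j, i < j → x i + x j ≠ k := by
  refine mem_iff.trans <| and_congr_right fun _ ↦ ⟨fun h ↦ ⟨fun i j hij ↦ (h i j hij.ne).1,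
    fun i j hij ↦ (h i j hij.ne).2⟩, fun ⟨hne, hsum⟩ i j hij ↦ ?_⟩
  rcases hij.lt_or_gt with hlt | hgt
  · exact ⟨hne i j hlt, hsum i j hlt⟩
  · exact ⟨(hne j i hgt).symm, add_comm (x i) (x j) ▸ hsum j i hgt⟩

variable [AddCommGroup G]

lemma insertNth_mem_iff {i : Fin (m + 1)} {a : G} {y : Fin m → G} :
    i.insertNth a y ∈ sumAvoidingTuples k S (m + 1) ↔
      a ∈ S ∧ y ∈ sumAvoidingTuples k ((S.erase a).erase (k - a)) m := by
  simp only [mem_iff, Fin.forall_iff_succAbove i, Fin.insertNth_apply_same,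
    Fin.insertNth_apply_succAbove, ne_eq, not_true_eq_false, IsEmpty.forall_iff, true_and,
    Fin.succAbove_ne, (Fin.succAbove_ne _ _).symm, not_false_eq_true, forall_const,
    Fin.succAbove_right_inj, mem_erase, eq_sub_iff_add_eq, add_comm a, eq_comm (a := a),
    forall_and]
  tauto

lemma card_filter_apply_eq (i : Fin (m + 1)) {a : G} (ha : a ∈ S) :
    #{x ∈ sumAvoidingTuples k S (m + 1) | x i = a} =
      #(sumAvoidingTuples k ((S.erase a).erase (k - a)) m) := by
  refine card_nbij' i.removeNth (i.insertNth (α := fun _ ↦ G) a) ?_ ?_ ?_ ?_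
  · intro x hx
    obtain ⟨hxS, rfl⟩ := mem_filter.1 hx
    rw [← Fin.insertNth_self_removeNth i x, insertNth_mem_iff] at hxS
    exact hxS.2
  · intro y hy
    exact mem_filter.2 ⟨insertNth_mem_iff.2 ⟨ha, hy⟩, Fin.insertNth_apply_same _ _ _⟩
  · intro x hx
    rw [← (mem_filter.1 hx).2, Fin.insertNth_self_removeNth]
  · intro y _
    exact Fin.removeNth_insertNth _ _ _

theorem card_eq_prod (hreflect : ∀ a ∈ S, k - a ∈ S) (hdouble : ∀ a ∈ S, a + a ≠ k) :
    #(sumAvoidingTuples k S m) = ∏ j ∈ range m, (#S - 2 * j) := by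
  induction m generalizing S with
  | zero => simp [sumAvoidingTuples]
  | succ m ih =>
    have hfiber : ∀ a ∈ S, #(sumAvoidingTuples k ((S.erase a).erase (k - a)) m) =
        ∏ j ∈ range m, (#S - 2 * (j + 1)) := by
      intro a ha
      have hne : k - a ≠ a := fun h ↦ hdouble a ha (sub_eq_iff_eq_add.1 h).symm
      rw [ih, card_erase_of_mem (mem_erase.2 ⟨hne, hreflect a ha⟩), card_erase_of_mem ha]
      · exact prod_congr rfl fun j _ ↦ by omega
      · simp only [mem_erase]
        exact fun b ⟨hb, hb', hbS⟩ ↦ ⟨fun h ↦ hb' (sub_right_injective h),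
          fun h ↦ hb (by rw [← h, sub_sub_cancel]), hreflect b hbS⟩
      · exact fun b hb ↦ hdouble b (mem_of_mem_erase (mem_of_mem_erase hb))
    rw [card_eq_sum_card_fiberwise (f := fun x ↦ x 0) (t := S)
        fun x hx ↦ (mem_iff.1 hx).1 0, sum_congr rfl fun a ha ↦ card_filter_apply_eq 0 ha,
      sum_congr rfl hfiber, sum_const, smul_eq_mul, prod_range_succ', mul_zero, Nat.sub_zero,
      mul_comm]

theorem card_insert_half {h : G} (hh : h + h = k) (hS : h ∉ S) :
    #(sumAvoidingTuples k (insert h S) (m + 1)) =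
      #(sumAvoidingTuples k S (m + 1)) + (m + 1) * #(sumAvoidingTuples k S m) := by
  set A := sumAvoidingTuples k (insert h S) (m + 1)
  have hfree : {x ∈ A | ¬∃ i, x i = h} = sumAvoidingTuples k S (m + 1) := by
    ext x
    simp only [A, mem_filter, mem_iff, mem_insert, not_exists]
    exact ⟨fun ⟨⟨hx, hx'⟩, hxh⟩ ↦ ⟨fun i ↦ (hx i).resolve_left (hxh i), hx'⟩,
      fun ⟨hx, hx'⟩ ↦ ⟨⟨fun i ↦ .inr (hx i), hx'⟩, fun i h' ↦ hS (h' ▸ hx i)⟩⟩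
  have hhit : {x ∈ A | ∃ i, x i = h} = univ.biUnion fun i ↦ {x ∈ A | x i = h} := by
    ext x
    simp
  have hdisj : Set.PairwiseDisjoint ↑(univ : Finset (Fin (m + 1)))
      fun i ↦ {x ∈ A | x i = h} := by
    intro i _ j _ hij
    refine disjoint_left.2 fun x hxi hxj ↦ ?_
    obtain ⟨hx, hxi⟩ := mem_filter.1 hxi
    exact ((mem_iff.1 hx).2 i j hij).1 (hxi.trans (mem_filter.1 hxj).2.symm)
  have hrest : ((insert h S).erase h).erase (k - h) = S := by
    rw [← hh, add_sub_cancel_right, erase_insert hS, erase_eq_of_notMem hS]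
  rw [← card_filter_add_card_filter_not (p := fun x ↦ ∃ i, x i = h), hfree, hhit,
    card_biUnion hdisj, sum_congr rfl fun i _ ↦ card_filter_apply_eq i (mem_insert_self h S),
    hrest, sum_const, card_univ, Fintype.card_fin, smul_eq_mul, add_comm]

end sumAvoidingTuples

section FiniteField
variable {F : Type*} [Field F] [Fintype F] [DecidableEq F]

theorem card_sumAvoidingTuples_compl_zero_self (h2 : (2 : F) ≠ 0) {k : F} (hk : k ≠ 0)
    (m : ℕ) :
    #(sumAvoidingTuples k {0, k}ᶜ (m + 1)) =
      ∏ j ∈ range (m + 1), (Fintype.card F - (2 * j + 3)) +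
        (m + 1) * ∏ j ∈ range m, (Fintype.card F - (2 * j + 3)) := by
  obtain ⟨h, hh⟩ : ∃ h : F, h + h = k := ⟨k / 2, by field_simp; ring⟩
  have h0 : h ≠ 0 := fun e ↦ hk (by rw [← hh, e, add_zero])
  have hhk : h ≠ k := fun e ↦ hk (by linear_combination hh - 2 * e)
  set T : Finset F := {0, k, h}ᶜ
  have hT : ∀ a ∈ T, k - a ∈ T := by
    simp only [T, mem_compl, mem_insert, mem_singleton, not_or]
    refine fun a ⟨ha0, hak, hah⟩ ↦ ⟨?_, ?_, ?_⟩ <;> intro e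
    · exact hak (by linear_combination -e)
    · exact ha0 (by linear_combination -e)
    · exact hah (by linear_combination -e - hh)
  have hT' : ∀ a ∈ T, a + a ≠ k := fun a ha e ↦ by
    refine (mem_compl.1 ha) (mem_insert_of_mem (mem_insert_of_mem (mem_singleton.2 ?_)))
    exact mul_left_cancel₀ h2 (by linear_combination e - hh)
  have hcardT : #T = Fintype.card F - 3 := by
    rw [card_compl, card_insert_of_notMem (by simp [hk.symm, h0.symm]),
      card_pair hhk.symm]
  have hU : ({0, k}ᶜ : Finset F) = insert h T := by
    ext a
    by_cases ha : a = h
    · subst ha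
      simp [T, h0, hhk]
    · simp [T, ha]
  rw [hU, sumAvoidingTuples.card_insert_half hh (by simp [T]),
    sumAvoidingTuples.card_eq_prod hT hT', sumAvoidingTuples.card_eq_prod hT hT', hcardT]
  simp only [Nat.sub_sub, add_comm 3]

end FiniteField

theorem stmt_4_general (p n : ℕ) (hp : p.Prime) [NeZero p] (hodd : Odd p)
    (k : ZMod p) (hk : k ≠ 0) :
    (Finset.univ.filter (fun x : Fin (n - 1) → ZMod p =>
      (∀ i, x i ≠ 0) ∧ (∀ i, x i ≠ k) ∧
      (∀ i1 i2 : Fin (n - 1), i1 < i2 → x i1 ≠ x i2) ∧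
      (∀ i1 i2 : Fin (n - 1), i1 < i2 → x i1 + x i2 ≠ k))).card
      = (∏ j ∈ Finset.range (n - 1), (p - (2 * j + 3)))
        + (n - 1) * ∏ j ∈ Finset.range (n - 2), (p - (2 * j + 3)) := by
  have : Fact p.Prime := ⟨hp⟩
  have h2 : (2 : ZMod p) ≠ 0 := Ring.two_ne_zero <| by
    rw [ZMod.ringChar_zmod_n]
    rintro rfl
    exact absurd hodd (by decide)
  trans #(sumAvoidingTuples k {0, k}ᶜ (n - 1))
  · congr 1
    ext x
    simp [sumAvoidingTuples.mem_iff_lt, forall_and, and_assoc]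
  obtain _ | _ | m := n
  · simp [sumAvoidingTuples]
  · simp [sumAvoidingTuples]
  · rw [show m + 2 - 1 = m + 1 by rfl, show m + 2 - 2 = m by rfl,
      card_sumAvoidingTuples_compl_zero_self h2 hk, ZMod.card]

theorem stmt_4 (p n : ℕ) (hp : p.Prime) [NeZero p] (hodd : Odd p) (hn : 2 ≤ n)
    (hpn : 2 * n - 1 < p) (k : ZMod p) (hk : k ≠ 0) :
    (Finset.univ.filter (fun x : Fin (n - 1) → ZMod p =>
      (∀ i, x i ≠ 0) ∧ (∀ i, x i ≠ k) ∧
      (∀ i1 i2 : Fin (n - 1), i1 < i2 → x i1 ≠ x i2) ∧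
      (∀ i1 i2 : Fin (n - 1), i1 < i2 → x i1 + x i2 ≠ k))).card
      = (∏ j ∈ Finset.range (n - 1), (p - (2 * j + 3)))
        + (n - 1) * ∏ j ∈ Finset.range (n - 2), (p - (2 * j + 3)) :=
  stmt_4_general p n hp hodd k hk
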